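/- arXiv:1411.6532 — 2 statements merged into one kernel-verified Lean document; each statement's English description precedes it below -/
import Mathlib

section
/- Let G be a simple connected graph on n ≥ 2 vertices with maximum degree Δ and at least one pair of distinct nonadjacent vertices, and let λ and μ be real numbers such that every pair of adjacent vertices of G has at least λ common neighbors and every pair of distinct nonadjacent vertices of G has at least μ common neighbors. Then the largest Laplacian eigenvalue satisfies ℓ_1(G) ≤ ( 2Δ − λ + μ + sqrt( (2Δ − λ + μ)² − 4μn ) ) / 2. -/
/-!
Take an eigenvector `x` for `ℓ₁ > 0` and a vertex `u` where `x` is maximal; `x` is orthogonal to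
the constants, so `x u > 0`. Writing `(L²x)_u = ℓ₁² x_u` in terms of the nonnegative differences
`x_u - x_w`, a neighbour `v` of `u` gets the coefficient `d_u + d_v - c_uv ≤ 2Δ - λ` and a
non-neighbour `w` the coefficient `-c_uw ≤ -μ`, where `c` counts common neighbours. The
differences over the neighbours sum to `(Lx)_u = ℓ₁ x_u` and all differences to `n x_u`, whence
`ℓ₁² ≤ (2Δ - λ + μ) ℓ₁ - μ n`, and `ℓ₁` is at most the larger root of this quadratic.
-/

open Finset Matrix

theorem pos_of_sum_eq_zero_of_forall_le {ι : Type*} [Fintype ι] {x : ι → ℝ} (hx : x ≠ 0)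
    (hsum : ∑ i, x i = 0) {u : ι} (hu : ∀ i, x i ≤ x u) : 0 < x u := by
  by_contra! hneg
  refine hx (funext fun i ↦ ?_)
  exact (sum_eq_zero_iff_of_nonpos fun j _ ↦ (hu j).trans hneg).1 hsum i (mem_univ i)

theorem le_add_sqrt_div_two_of_sq_le {x b c : ℝ} (h : x ^ 2 ≤ b * x - c) :
    x ≤ (b + √(b ^ 2 - 4 * c)) / 2 := by
  have hsq : (2 * x - b) ^ 2 ≤ b ^ 2 - 4 * c := by nlinarith
  have := Real.le_sqrt_of_sq_le hsq
  linarith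

namespace SimpleGraph

variable {V : Type*} [Fintype V] [DecidableEq V] (G : SimpleGraph V) [DecidableRel G.Adj]

theorem adjMatrix_mul_self_apply {R : Type*} [NonAssocSemiring R] (u w : V) :
    (G.adjMatrix R * G.adjMatrix R) u w = #(G.neighborFinset u ∩ G.neighborFinset w) := by
  rw [adjMatrix_mul_apply, ← filter_mem_eq_inter]
  simp [sum_boole, adj_comm]

theorem lapMatrix_mul_self_apply_of_adj {R : Type*} [Ring R] {u v : V} (h : G.Adj u v) :
    (G.lapMatrix R * G.lapMatrix R) u v
      = #(G.neighborFinset u ∩ G.neighborFinset v) - G.degree u - G.degree v := by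
  simp only [lapMatrix, degMatrix, sub_mul, mul_sub, Matrix.sub_apply, Matrix.diagonal_mul,
    Matrix.mul_diagonal, adjMatrix_mul_self_apply, Matrix.diagonal_apply_ne _ h.ne,
    adjMatrix_apply, if_pos h, zero_mul, one_mul, mul_one]
  abel

theorem lapMatrix_mul_self_apply_of_not_adj {R : Type*} [Ring R] {u w : V} (hne : u ≠ w)
    (h : ¬G.Adj u w) :
    (G.lapMatrix R * G.lapMatrix R) u w = #(G.neighborFinset u ∩ G.neighborFinset w) := by
  simp only [lapMatrix, degMatrix, sub_mul, mul_sub, Matrix.sub_apply, Matrix.diagonal_mul,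
    Matrix.mul_diagonal, adjMatrix_mul_self_apply, Matrix.diagonal_apply_ne _ hne,
    adjMatrix_apply, if_neg h]
  simp

theorem lapMatrix_mulVec_apply' {R : Type*} [NonAssocRing R] (x : V → R) (u : V) :
    (G.lapMatrix R *ᵥ x) u = ∑ v ∈ G.neighborFinset u, (x u - x v) := by
  rw [lapMatrix_mulVec_apply, sum_sub_distrib, sum_const, card_neighborFinset_eq_degree,
    nsmul_eq_mul]

theorem sum_eq_add_sum_neighborFinset_add_sum_compl {M : Type*} [AddCommMonoid M] (f : V → M)
    (u : V) :
    ∑ w, f w = f u + ∑ v ∈ G.neighborFinset u, f v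
      + ∑ w ∈ (insert u (G.neighborFinset u))ᶜ, f w := by
  rw [← sum_add_sum_compl (insert u (G.neighborFinset u)),
    sum_insert (G.notMem_neighborFinset_self u)]

theorem lapMatrix_mulVec_lapMatrix_mulVec_apply {R : Type*} [CommRing R] (x : V → R) (u : V) :
    (G.lapMatrix R *ᵥ (G.lapMatrix R *ᵥ x)) u
      = ∑ v ∈ G.neighborFinset u,
          (G.degree u + G.degree v - #(G.neighborFinset u ∩ G.neighborFinset v) : R)
            * (x u - x v)
        - ∑ w ∈ (insert u (G.neighborFinset u))ᶜ,
          (#(G.neighborFinset u ∩ G.neighborFinset w) : R) * (x u - x w) := by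
  have hrow : ∑ w, (G.lapMatrix R * G.lapMatrix R) u w = 0 := by
    have := congrFun (congrArg (G.lapMatrix R *ᵥ ·) G.lapMatrix_mulVec_const_eq_zero) u
    rw [mulVec_mulVec, mulVec_zero] at this
    simpa only [mulVec, dotProduct, mul_one, Pi.zero_apply] using this
  have hcentre : (G.lapMatrix R *ᵥ (G.lapMatrix R *ᵥ x)) u
      = -∑ w, (G.lapMatrix R * G.lapMatrix R) u w * (x u - x w) := by
    simp only [mulVec_mulVec, mul_sub, sum_sub_distrib, ← sum_mul, hrow, zero_mul, zero_sub,
      neg_neg]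
    rfl
  rw [hcentre, G.sum_eq_add_sum_neighborFinset_add_sum_compl _ u, sub_self, mul_zero, zero_add,
    neg_add, sub_eq_add_neg]
  congr 1
  · rw [← sum_neg_distrib]
    refine sum_congr rfl fun v hv ↦ ?_
    rw [G.lapMatrix_mul_self_apply_of_adj ((G.mem_neighborFinset u v).1 hv)]
    ring
  · congr 1
    refine sum_congr rfl fun w hw ↦ ?_
    simp only [mem_compl, mem_insert, not_or, mem_neighborFinset] at hw
    rw [G.lapMatrix_mul_self_apply_of_not_adj (Ne.symm hw.1) hw.2]

theorem sum_eq_zero_of_lapMatrix_mulVec_eq_smul {R : Type*} [CommRing R] [NoZeroDivisors R]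
    {l : R} {x : V → R} (hx : G.lapMatrix R *ᵥ x = l • x) (hl : l ≠ 0) : ∑ i, x i = 0 := by
  have hzero : (fun _ ↦ (1 : R)) ⬝ᵥ (G.lapMatrix R *ᵥ x) = 0 := by
    rw [dotProduct_mulVec, ← mulVec_transpose, (G.isSymm_lapMatrix (R := R)).eq,
      lapMatrix_mulVec_const_eq_zero, zero_dotProduct]
  rw [hx, dotProduct_smul, smul_eq_mul, mul_eq_zero] at hzero
  simpa [dotProduct, hl] using hzero

theorem exists_pos_eigenvalue_lapMatrix {v : V} (hv : 0 < G.degree v) :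
    ∃ l : ℝ, 0 < l ∧ ∃ x ≠ 0, G.lapMatrix ℝ *ᵥ x = l • x := by
  have hL := G.isHermitian_lapMatrix (R := ℝ)
  have htrace : 0 < ∑ i, hL.eigenvalues i := by
    have := hL.trace_eq_sum_eigenvalues
    simp only [lapMatrix, trace_sub, degMatrix, trace_diagonal, trace_adjMatrix, sub_zero,
      RCLike.ofReal_real_eq_id, id] at this
    exact this ▸ sum_pos' (fun i _ ↦ by positivity) ⟨v, mem_univ v, by exact_mod_cast hv⟩
  obtain ⟨i, -, hi⟩ :=
    exists_lt_of_sum_lt (s := univ) (f := 0) (g := hL.eigenvalues) (by simpa using htrace)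
  exact ⟨hL.eigenvalues i, hi, _,
    (WithLp.ofLp_eq_zero 2).ne.2 <| hL.eigenvectorBasis.orthonormal.ne_zero i,
    hL.mulVec_eigenvectorBasis i⟩

theorem sq_mul_le_of_lapMatrix_mulVec_eq_smul {lam mu : ℝ}
    (hlam : ∀ i j, G.Adj i j → lam ≤ #(G.neighborFinset i ∩ G.neighborFinset j))
    (hmu : ∀ i j, i ≠ j → ¬G.Adj i j → mu ≤ #(G.neighborFinset i ∩ G.neighborFinset j))
    {l : ℝ} {x : V → ℝ} (hx : G.lapMatrix ℝ *ᵥ x = l • x) (hsum : ∑ i, x i = 0) {u : V}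
    (hu : ∀ w, x w ≤ x u) :
    l ^ 2 * x u ≤ ((2 * G.maxDegree - lam + mu) * l - mu * Fintype.card V) * x u := by
  have hnbr : ∑ v ∈ G.neighborFinset u, (x u - x v) = l * x u := by
    rw [← lapMatrix_mulVec_apply', hx, Pi.smul_apply, smul_eq_mul]
  have hfar : ∑ w ∈ (insert u (G.neighborFinset u))ᶜ, (x u - x w)
      = (Fintype.card V - l) * x u := by
    have := G.sum_eq_add_sum_neighborFinset_add_sum_compl (fun w ↦ x u - x w) u
    rw [sum_sub_distrib, hsum, sum_const, card_univ, nsmul_eq_mul, sub_self, hnbr] at this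
    linarith
  have hdeg (v : V) : (G.degree v : ℝ) ≤ G.maxDegree := by
    exact_mod_cast G.degree_le_maxDegree v
  calc l ^ 2 * x u = (G.lapMatrix ℝ *ᵥ (G.lapMatrix ℝ *ᵥ x)) u := by
        rw [hx, mulVec_smul, hx, smul_smul, sq]; rfl
    _ = _ := G.lapMatrix_mulVec_lapMatrix_mulVec_apply x u
    _ ≤ ∑ v ∈ G.neighborFinset u, (2 * G.maxDegree - lam) * (x u - x v)
        - ∑ w ∈ (insert u (G.neighborFinset u))ᶜ, mu * (x u - x w) := by
      refine sub_le_sub (sum_le_sum fun v hv ↦ ?_) (sum_le_sum fun w hw ↦ ?_)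
      · have := hlam u v ((G.mem_neighborFinset u v).1 hv)
        exact mul_le_mul_of_nonneg_right (by linarith [hdeg u, hdeg v]) (sub_nonneg.2 (hu v))
      · simp only [mem_compl, mem_insert, not_or, mem_neighborFinset] at hw
        exact mul_le_mul_of_nonneg_right (hmu u w (Ne.symm hw.1) hw.2) (sub_nonneg.2 (hu w))
    _ = ((2 * G.maxDegree - lam + mu) * l - mu * Fintype.card V) * x u := by
      rw [← mul_sum, ← mul_sum, hnbr, hfar]
      ring

end SimpleGraph

theorem laplacian_index_maxDegree_bound_general (n : ℕ) (hn : 2 ≤ n)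
    (G : SimpleGraph (Fin n)) [DecidableRel G.Adj]
    (hconn : G.Connected)
    (lam mu : ℝ)
    (hlam : ∀ i j : Fin n, G.Adj i j →
      lam ≤ ((G.neighborFinset i ∩ G.neighborFinset j).card : ℝ))
    (hmu : ∀ i j : Fin n, i ≠ j → ¬ G.Adj i j →
      mu ≤ ((G.neighborFinset i ∩ G.neighborFinset j).card : ℝ))
    (ℓ₁ : ℝ)
    (hℓ₁ : IsGreatest {l : ℝ | ∃ X : Fin n → ℝ, X ≠ 0 ∧
      (G.lapMatrix ℝ).mulVec X = l • X} ℓ₁) :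
    ℓ₁ ≤ (2 * (G.maxDegree : ℝ) - lam + mu
      + Real.sqrt ((2 * (G.maxDegree : ℝ) - lam + mu) ^ 2 - 4 * mu * (n : ℝ))) / 2 := by
  have : Nontrivial (Fin n) := Fin.nontrivial_iff_two_le.2 hn
  obtain ⟨l, hl, y, hy0, hy⟩ :=
    G.exists_pos_eigenvalue_lapMatrix (hconn.preconnected.degree_pos_of_nontrivial ⟨0, by omega⟩)
  have hℓ₁_pos : 0 < ℓ₁ := hl.trans_le (hℓ₁.2 ⟨y, hy0, hy⟩)
  obtain ⟨X, hX0, hX⟩ := hℓ₁.1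
  obtain ⟨u, -, hu⟩ := exists_max_image univ X univ_nonempty
  have hsum := G.sum_eq_zero_of_lapMatrix_mulVec_eq_smul hX hℓ₁_pos.ne'
  have hXu := pos_of_sum_eq_zero_of_forall_le hX0 hsum fun w ↦ hu w (mem_univ w)
  have hquad := G.sq_mul_le_of_lapMatrix_mulVec_eq_smul hlam hmu hX hsum fun w ↦ hu w (mem_univ w)
  rw [Fintype.card_fin, mul_le_mul_iff_left₀ hXu] at hquad
  simpa only [mul_assoc] using le_add_sqrt_div_two_of_sq_le hquad

/-- **Corollary.** For a simple connected non-complete graph `G` on `n ≥ 2` vertices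
with maximum degree `Δ` and reals `λ ≤ λ(G)`, `μ ≤ μ(G)`:
`ℓ₁(G) ≤ (2Δ − λ + μ + √((2Δ − λ + μ)² − 4μn))/2`. -/
theorem laplacian_index_maxDegree_bound (n : ℕ) (hn : 2 ≤ n)
    (G : SimpleGraph (Fin n)) [DecidableRel G.Adj]
    (hconn : G.Connected)
    (hnoncomplete : ∃ i j : Fin n, i ≠ j ∧ ¬ G.Adj i j)
    (lam mu : ℝ)
    (hlam : ∀ i j : Fin n, G.Adj i j →
      lam ≤ ((G.neighborFinset i ∩ G.neighborFinset j).card : ℝ))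
    (hmu : ∀ i j : Fin n, i ≠ j → ¬ G.Adj i j →
      mu ≤ ((G.neighborFinset i ∩ G.neighborFinset j).card : ℝ))
    (ℓ₁ : ℝ)
    (hℓ₁ : IsGreatest {l : ℝ | ∃ X : Fin n → ℝ, X ≠ 0 ∧
      (G.lapMatrix ℝ).mulVec X = l • X} ℓ₁) :
    ℓ₁ ≤ (2 * (G.maxDegree : ℝ) - lam + mu
      + Real.sqrt ((2 * (G.maxDegree : ℝ) - lam + mu) ^ 2 - 4 * mu * (n : ℝ))) / 2 :=
  laplacian_index_maxDegree_bound_general n hn G hconn lam mu hlam hmu ℓ₁ hℓ₁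
end

section
/- Let G be a simple graph on vertex set V = {1,...,n} with adjacency matrix A = A(G), degrees d_i, and for distinct vertices j, k let w_{jk} = |G_1(j) ∩ G_1(k)| be the number of common neighbors of j and k. Then for every real vector X = (x_1,...,x_n)^T: X^T A² X = Σ_{i ∈ V} ( Σ_{j ∈ G_1(i)} d_j ) x_i² − Σ_{j < k, jk ∈ E} w_{jk} (x_j − x_k)² − Σ_{j < k, jk ∉ E} w_{jk} (x_j − x_k)². -/
/-!
For a symmetric matrix `B`, write `x i * B i j * x j = B i j * x i ^ 2 - B i j * x i * (x i - x j)`;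
in the second sum the diagonal terms vanish and the terms `(i, j)`, `(j, i)` pair up to
`B i j * (x i - x j) ^ 2`. For `B = A²` the entries are the common-neighbour counts and the row sums
are `∑_{j ∈ G_1(i)} d_j`; splitting the pairs `i < j` by adjacency gives the two subtracted sums.
-/

open Finset Matrix

theorem Finset.sum_sum_eq_sum_diag_add_sum_lt {ι M : Type*} [Fintype ι] [LinearOrder ι]
    [AddCommMonoid M] (f : ι → ι → M) :
    ∑ i, ∑ j, f i j =
      ∑ i, f i i + ∑ p ∈ univ.filter (fun p : ι × ι => p.1 < p.2), (f p.1 p.2 + f p.2 p.1) := by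
  have hsplit : ∀ i j, f i j =
      (if i = j then f i j else 0) + ((if i < j then f i j else 0) + if j < i then f i j else 0) := by
    intro i j
    rcases lt_trichotomy i j with h | rfl | h
    · simp [h, h.ne, h.not_gt]
    · simp
    · simp [h, h.ne', h.not_gt]
  have hswap : ∑ i, ∑ j, (if j < i then f i j else 0) = ∑ i, ∑ j, if i < j then f j i else 0 :=
    sum_comm
  rw [sum_filter, Fintype.sum_prod_type]
  conv_lhs => enter [2, i, 2, j]; rw [hsplit i j]
  simp only [sum_add_distrib, sum_ite_eq, mem_univ, if_true, ite_add_zero, hswap]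

theorem Matrix.IsSymm.dotProduct_mulVec_eq {ι R : Type*} [Fintype ι] [LinearOrder ι] [CommRing R]
    {B : Matrix ι ι R} (hB : B.IsSymm) (x : ι → R) :
    x ⬝ᵥ B *ᵥ x = ∑ i, (∑ j, B i j) * x i ^ 2
      - ∑ p ∈ univ.filter (fun p : ι × ι => p.1 < p.2), B p.1 p.2 * (x p.1 - x p.2) ^ 2 := by
  have hpair : ∀ i j, B i j * x i * (x i - x j) + B j i * x j * (x j - x i)
      = B i j * (x i - x j) ^ 2 := fun i j => by rw [hB.apply i j]; ring
  calc x ⬝ᵥ B *ᵥ x = ∑ i, (∑ j, B i j) * x i ^ 2 - ∑ i, ∑ j, B i j * x i * (x i - x j) := by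
        simp only [dotProduct, mulVec, sum_mul, ← sum_sub_distrib, mul_sum]
        refine sum_congr rfl fun i _ => sum_congr rfl fun j _ => by ring
    _ = _ := by
        rw [sum_sum_eq_sum_diag_add_sum_lt]
        simp [hpair]

namespace SimpleGraph
variable {V α : Type*} [Fintype V] (G : SimpleGraph V) [DecidableRel G.Adj]

theorem adjMatrix_mul_self_apply_s18 [DecidableEq V] [NonAssocSemiring α] (i j : V) :
    (G.adjMatrix α * G.adjMatrix α) i j = #(G.neighborFinset i ∩ G.neighborFinset j) := by
  simp only [adjMatrix_mul_apply, adjMatrix_apply, sum_boole, ← filter_mem_eq_inter,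
    mem_neighborFinset, adj_comm]

theorem sum_adjMatrix_mul_self_apply [NonAssocSemiring α] (i : V) :
    ∑ j, (G.adjMatrix α * G.adjMatrix α) i j = ∑ j ∈ G.neighborFinset i, (G.degree j : α) := by
  simp only [adjMatrix_mul_apply]
  rw [sum_comm]
  refine sum_congr rfl fun u _ => ?_
  simp [adjMatrix_apply, sum_boole, degree, neighborFinset_eq_filter]

end SimpleGraph

/-- **Lemma (quadratic form of `A²`).** For a simple graph `G` on `{1,...,n}` with
adjacency matrix `A`, common-neighbor counts `w_{jk}` and any real vector `X`:
`Xᵀ A² X = ∑_i (∑_{j∈N(i)} d_j) x_i² − ∑_{j<k, jk∈E} w_{jk}(x_j − x_k)²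
  − ∑_{j<k, jk∉E} w_{jk}(x_j − x_k)²`. -/
theorem adj_sq_quadratic_form (n : ℕ) (G : SimpleGraph (Fin n)) [DecidableRel G.Adj]
    (X : Fin n → ℝ) :
    dotProduct X ((G.adjMatrix ℝ * G.adjMatrix ℝ).mulVec X) =
      (∑ i, (∑ j ∈ G.neighborFinset i, (G.degree j : ℝ)) * X i ^ 2)
      - (∑ p ∈ Finset.univ.filter
            (fun p : Fin n × Fin n => p.1 < p.2 ∧ G.Adj p.1 p.2),
          ((G.neighborFinset p.1 ∩ G.neighborFinset p.2).card : ℝ)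
            * (X p.1 - X p.2) ^ 2)
      - (∑ p ∈ Finset.univ.filter
            (fun p : Fin n × Fin n => p.1 < p.2 ∧ ¬ G.Adj p.1 p.2),
          ((G.neighborFinset p.1 ∩ G.neighborFinset p.2).card : ℝ)
            * (X p.1 - X p.2) ^ 2) := by
  have hsymm : (G.adjMatrix ℝ * G.adjMatrix ℝ).IsSymm := by
    simpa using isSymm_mul_transpose_self (G.adjMatrix ℝ)
  rw [hsymm.dotProduct_mulVec_eq, sub_sub, ← filter_filter, ← filter_filter,
    sum_filter_add_sum_filter_not]
  simp_rw [G.sum_adjMatrix_mul_self_apply, G.adjMatrix_mul_self_apply_s18]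
end
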